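/- Let f_i : [0,1] → ℝ be defined by f_i(x) = x_i · 4^{Σ_{j=0}^{i−1} x_j} · (Σ_{j=i}^{∞} (1 − x_j)/2^j)^2 (binary digits of x, finite expansion for dyadic rationals). Then ∫_0^1 f_1(x) dx = 1/24 and for each i ≥ 1, ∫_0^1 f_{i+1}(x) dx = (5/8) ∫_0^1 f_i(x) dx. -/

import Mathlib

/-!
On `[0, 1)` the units digit vanishes, so `fi (i + 1) x = fi i (2 * x) / 4`; on `[1, 2)` adding `1`
changes only the units digit, which multiplies `fi i` by `4` when `i ≥ 1`. Hence
`∫₀¹ fi (i + 1) = (∫₀¹ fi i + 4 ∫₀¹ fi i) / 8 = 5/8 ∫₀¹ fi i`.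
For `fi 1`, the identity `digit x (n + 1) = 2 fract (2ⁿ x) - fract (2ⁿ⁺¹ x)` makes the tail sum
telescope to `tail x 1 = 1 - x` on `[0, 1)`, so `fi 1` is `0` on `(0, 1/2)` and `(1 - x)²` on
`(1/2, 1)`, with integral `1/24`.
-/

/-- The `i`-th binary digit of `x ∈ [0,1]` (with `digit x 0` the units digit),
using the finite (terminating) expansion at dyadic rationals. -/
noncomputable def digit (x : ℝ) (i : ℕ) : ℕ := (⌊2 ^ i * x⌋).toNat % 2

/-- The tail sum `Σ_{j=i}^{∞} (1 - x_j)/2^j`. -/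
noncomputable def tail (x : ℝ) (i : ℕ) : ℝ :=
  ∑' j : ℕ, (1 - (digit x (i + j) : ℝ)) / 2 ^ (i + j)

/-- The function `F` from the cellular automaton `T_a`. -/
noncomputable def F (x : ℝ) : ℝ :=
  ∑' i : ℕ, (digit x i : ℝ) * 4 ^ (∑ j ∈ Finset.range i, digit x j) * (tail x i) ^ 2

/-- The `i`-th summand of the series defining `F`. -/
noncomputable def fi (i : ℕ) (x : ℝ) : ℝ :=
  (digit x i : ℝ) * 4 ^ (∑ j ∈ Finset.range i, digit x j) * (tail x i) ^ 2

open Filter Topology Set MeasureTheory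

lemma digit_le_one (x : ℝ) (i : ℕ) : digit x i ≤ 1 :=
  Nat.le_of_lt_succ (Nat.mod_lt _ two_pos)

lemma digit_succ (x : ℝ) (i : ℕ) : digit x (i + 1) = digit (2 * x) i := by
  rw [digit, digit, pow_succ, mul_assoc]

lemma floor_two_mul_toNat_mod_two {y : ℝ} (hy : 0 ≤ y) :
    ((⌊2 * y⌋.toNat % 2 : ℕ) : ℝ) = 2 * Int.fract y - Int.fract (2 * y) := by
  have hlow : 2 * ⌊y⌋ ≤ ⌊2 * y⌋ := Int.le_floor.2 (by push_cast; linarith [Int.floor_le y])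
  have hup : ⌊2 * y⌋ < 2 * ⌊y⌋ + 2 :=
    Int.floor_lt.2 (by push_cast; linarith [Int.lt_floor_add_one y])
  have hnonneg : 0 ≤ ⌊y⌋ := Int.floor_nonneg.2 hy
  have hdigit : ((⌊2 * y⌋.toNat % 2 : ℕ) : ℤ) = ⌊2 * y⌋ - 2 * ⌊y⌋ := by omega
  rw [Int.fract, Int.fract, ← Int.cast_natCast, hdigit]
  push_cast
  ring

lemma digit_succ_eq_fract {x : ℝ} (hx : 0 ≤ x) (n : ℕ) :
    (digit x (n + 1) : ℝ) = 2 * Int.fract (2 ^ n * x) - Int.fract (2 ^ (n + 1) * x) := by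
  rw [digit, pow_succ', mul_assoc, floor_two_mul_toNat_mod_two (by positivity)]

lemma fract_two_pow_mul_add_one (y : ℝ) (n : ℕ) :
    Int.fract (2 ^ n * (y + 1)) = Int.fract (2 ^ n * y) := by
  rw [mul_add, mul_one]
  exact_mod_cast Int.fract_add_natCast (2 ^ n * y) (2 ^ n)

lemma digit_add_one {y : ℝ} (hy : 0 ≤ y) {i : ℕ} (hi : i ≠ 0) :
    digit (y + 1) i = digit y i := by
  obtain ⟨n, rfl⟩ := Nat.exists_eq_succ_of_ne_zero hi
  apply Nat.cast_injective (R := ℝ)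
  rw [digit_succ_eq_fract (by linarith), digit_succ_eq_fract hy, fract_two_pow_mul_add_one,
    fract_two_pow_mul_add_one]

lemma tail_term_le (x : ℝ) (i j : ℕ) :
    (1 - (digit x (i + j) : ℝ)) / 2 ^ (i + j) ≤ (1 / 2) ^ j := by
  rw [one_div_pow]
  gcongr
  · exact sub_le_self _ (Nat.cast_nonneg _)
  · norm_num
  · omega

lemma tail_term_nonneg (x : ℝ) (k : ℕ) : 0 ≤ (1 - (digit x k : ℝ)) / 2 ^ k := by
  have : (digit x k : ℝ) ≤ 1 := by exact_mod_cast digit_le_one x k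
  exact div_nonneg (by linarith) (by positivity)

lemma summable_tail (x : ℝ) (i : ℕ) :
    Summable fun j : ℕ => (1 - (digit x (i + j) : ℝ)) / 2 ^ (i + j) :=
  summable_geometric_two.of_nonneg_of_le (fun j => tail_term_nonneg x (i + j)) (tail_term_le x i)

lemma tail_nonneg (x : ℝ) (i : ℕ) : 0 ≤ tail x i :=
  tsum_nonneg fun j => tail_term_nonneg x (i + j)

lemma tail_le_two (x : ℝ) (i : ℕ) : tail x i ≤ 2 :=
  tsum_geometric_two ▸ (summable_tail x i).tsum_le_tsum (tail_term_le x i) summable_geometric_two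

lemma hasSum_sub_succ_of_tendsto_zero {G : Type*} [TopologicalSpace G] [AddCommGroup G]
    [IsTopologicalAddGroup G] [T2Space G] {v : ℕ → G} (hv : Tendsto v atTop (𝓝 0))
    (hs : Summable fun n => v n - v (n + 1)) : HasSum (fun n => v n - v (n + 1)) (v 0) := by
  rw [hs.hasSum_iff_tendsto_nat]
  simp_rw [Finset.sum_range_sub']
  simpa using (hv.const_sub (v 0))

lemma tail_succ (x : ℝ) (i : ℕ) : tail x (i + 1) = tail (2 * x) i / 2 := by
  rw [tail, tail, ← tsum_div_const]
  congr 1 with j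
  rw [show i + 1 + j = i + j + 1 by ring, digit_succ, pow_succ, div_div]

lemma tail_add_one {y : ℝ} (hy : 0 ≤ y) {i : ℕ} (hi : i ≠ 0) : tail (y + 1) i = tail y i := by
  rw [tail, tail]
  congr 1 with j
  rw [digit_add_one hy (by omega)]

lemma tail_succ_eq_fract {x : ℝ} (hx : 0 ≤ x) (i : ℕ) :
    tail x (i + 1) = (1 - Int.fract (2 ^ i * x)) / 2 ^ i := by
  set v : ℕ → ℝ := fun n => (1 - Int.fract (2 ^ (i + n) * x)) / 2 ^ (i + n)
  have hterm : ∀ n, (1 - (digit x (i + 1 + n) : ℝ)) / 2 ^ (i + 1 + n) = v n - v (n + 1) := by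
    intro n
    rw [show i + 1 + n = i + n + 1 by ring, digit_succ_eq_fract hx]
    simp only [v, ← add_assoc, pow_succ]
    field_simp
    ring
  have hv : Tendsto v atTop (𝓝 0) := by
    refine squeeze_zero (fun n => ?_) (fun n => ?_)
      (tendsto_pow_atTop_nhds_zero_of_lt_one (r := (1 / 2 : ℝ)) (by norm_num) (by norm_num))
    · exact div_nonneg (by linarith [Int.fract_lt_one (2 ^ (i + n) * x)]) (by positivity)
    · rw [one_div_pow]
      dsimp only [v]
      gcongr
      · linarith [Int.fract_nonneg (2 ^ (i + n) * x)]
      · norm_num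
      · omega
  have hsum := hasSum_sub_succ_of_tendsto_zero hv
    (by simpa only [hterm] using summable_tail x (i + 1))
  simp only [tail, hterm, hsum.tsum_eq, v, add_zero]

lemma digit_zero_of_mem_Ico {x : ℝ} (hx : x ∈ Ico (0 : ℝ) 1) : digit x 0 = 0 := by
  simp [digit, Int.floor_eq_zero_iff.2 hx]

lemma fi_succ {x : ℝ} (hx : x ∈ Ico (0 : ℝ) 1) (i : ℕ) : fi (i + 1) x = fi i (2 * x) / 4 := by
  simp only [fi, Finset.sum_range_succ', digit_succ, tail_succ, digit_zero_of_mem_Ico hx, add_zero]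
  ring

lemma fi_add_one {y : ℝ} (hy : y ∈ Ico (0 : ℝ) 1) {i : ℕ} (hi : i ≠ 0) :
    fi i (y + 1) = 4 * fi i y := by
  obtain ⟨k, rfl⟩ := Nat.exists_eq_succ_of_ne_zero hi
  have hdigit : digit (y + 1) 0 = 1 := by simp [digit, Int.floor_eq_zero_iff.2 hy]
  simp only [fi, Finset.sum_range_succ', digit_add_one hy.1 (Nat.succ_ne_zero _),
    tail_add_one hy.1 (Nat.succ_ne_zero _), hdigit, digit_zero_of_mem_Ico hy, pow_succ]
  ring

lemma fi_one_of_mem_Ioo_zero_half {x : ℝ} (hx : x ∈ Ioo (0 : ℝ) (1 / 2)) : fi 1 x = 0 := by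
  have hdigit : digit x 1 = 0 := by
    rw [digit_succ, digit_zero_of_mem_Ico ⟨by linarith [hx.1], by linarith [hx.2]⟩]
  simp [fi, hdigit]

lemma fi_one_of_mem_Ioo_half_one {x : ℝ} (hx : x ∈ Ioo (1 / 2 : ℝ) 1) : fi 1 x = (1 - x) ^ 2 := by
  have hx' : x ∈ Ico (0 : ℝ) 1 := ⟨by linarith [hx.1], hx.2⟩
  have hdigit : digit x 1 = 1 := by
    simp [digit, Int.floor_eq_iff.2 (show ((1 : ℤ) : ℝ) ≤ 2 * x ∧ 2 * x < (1 : ℤ) + 1 by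
      constructor <;> push_cast <;> linarith [hx.1, hx.2])]
  simp [fi, hdigit, digit_zero_of_mem_Ico hx', tail_succ_eq_fract hx'.1 0, Int.fract_eq_self.2 hx']

lemma measurable_digit (i : ℕ) : Measurable fun x : ℝ => digit x i :=
  measurable_from_top (f := fun n : ℤ => n.toNat % 2) |>.comp (measurable_const_mul _).floor

lemma measurable_tail (i : ℕ) : Measurable fun x : ℝ => tail x i :=
  measurable_of_tendsto_metrizable
    (fun _ => Finset.measurable_sum _ fun j _ =>
      (measurable_const.sub (measurable_from_top.comp (measurable_digit (i + j)))).div_const _)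
    (tendsto_pi_nhds.2 fun x => (summable_tail x i).hasSum.tendsto_sum_nat)

lemma measurable_fi (i : ℕ) : Measurable (fi i) :=
  ((measurable_from_top.comp (measurable_digit i)).mul
    (measurable_from_top.comp (Finset.measurable_sum _ fun j _ => measurable_digit j))).mul
    ((measurable_tail i).pow_const 2)

lemma norm_fi_le (i : ℕ) (x : ℝ) : ‖fi i x‖ ≤ 4 ^ i * 4 := by
  have hdigit : (digit x i : ℝ) ≤ 1 := by exact_mod_cast digit_le_one x i
  have hsum : ∑ j ∈ Finset.range i, digit x j ≤ i := by
    simpa using Finset.sum_le_card_nsmul (Finset.range i) _ 1 fun j _ => digit_le_one x j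
  have htail := tail_nonneg x i
  rw [Real.norm_eq_abs, abs_of_nonneg (by unfold fi; positivity)]
  calc fi i x ≤ 1 * 4 ^ i * 2 ^ 2 := by
        unfold fi
        gcongr
        · norm_num
        · exact tail_le_two x i
    _ = 4 ^ i * 4 := by norm_num

lemma intervalIntegrable_fi (i : ℕ) (a b : ℝ) : IntervalIntegrable (fi i) volume a b :=
  (IntegrableOn.of_bound measure_Icc_lt_top (measurable_fi i).aestronglyMeasurable _
    (ae_of_all _ (norm_fi_le i))).intervalIntegrable

lemma integral_fi_one : ∫ x in (0 : ℝ)..1, fi 1 x = 1 / 24 := by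
  rw [← intervalIntegral.integral_add_adjacent_intervals (intervalIntegrable_fi 1 0 (1 / 2))
      (intervalIntegrable_fi 1 (1 / 2) 1),
    intervalIntegral.integral_congr_Ioo_of_le (by norm_num) fun x hx =>
      fi_one_of_mem_Ioo_zero_half hx,
    intervalIntegral.integral_congr_Ioo_of_le (by norm_num) fun x hx =>
      fi_one_of_mem_Ioo_half_one hx, intervalIntegral.integral_zero,
    intervalIntegral.integral_comp_sub_left (· ^ 2), integral_pow]
  norm_num

lemma integral_fi_succ {i : ℕ} (hi : i ≠ 0) :
    ∫ x in (0 : ℝ)..1, fi (i + 1) x = 5 / 8 * ∫ x in (0 : ℝ)..1, fi i x := by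
  have hleft : ∫ x in (0 : ℝ)..1, fi (i + 1) x = (∫ x in (0 : ℝ)..2, fi i x) / 8 := by
    rw [intervalIntegral.integral_congr_Ioo_of_le zero_le_one fun x hx =>
        fi_succ (Ioo_subset_Ico_self hx) i, intervalIntegral.integral_div,
      intervalIntegral.integral_comp_mul_left (fi i) two_ne_zero, mul_zero, mul_one,
      smul_eq_mul]
    ring
  have hright : ∫ x in (1 : ℝ)..2, fi i x = 4 * ∫ x in (0 : ℝ)..1, fi i x := by
    rw [← intervalIntegral.integral_const_mul,
      ← intervalIntegral.integral_congr_Ioo_of_le zero_le_one fun x hx =>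
        fi_add_one (Ioo_subset_Ico_self hx) hi,
      intervalIntegral.integral_comp_add_right]
    norm_num
  rw [hleft, ← intervalIntegral.integral_add_adjacent_intervals (intervalIntegrable_fi i 0 1)
    (intervalIntegrable_fi i 1 2), hright]
  ring

theorem fi_integrals :
    (∫ x in (0 : ℝ)..1, fi 1 x = 1 / 24) ∧
    ∀ i : ℕ, 1 ≤ i → ∫ x in (0 : ℝ)..1, fi (i + 1) x = (5 / 8) * ∫ x in (0 : ℝ)..1, fi i x :=
  ⟨integral_fi_one, fun _ hi => integral_fi_succ (Nat.one_le_iff_ne_zero.1 hi)⟩
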